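/- arXiv:1003.0233 — 4 statements merged into one kernel-verified Lean document; each statement's English description precedes it below -/
import Mathlib

section
/- If a singleton set {m} of states on an orthomodular lattice L is a strong set of states, then L is distributive: a ⊓ (b ⊔ c) = (a ⊓ b) ⊔ (a ⊓ c) for all a, b, c ∈ L. -/
/-- `a` and `b` are orthogonal w.r.t. the orthocomplementation `compl`. -/
def IsOrtho {α : Type*} [Lattice α] [BoundedOrder α] (compl : α → α) (a b : α) : Prop :=
  a ≤ compl b

/-- `compl` makes the bounded lattice `α` into an orthomodular lattice. -/
structure IsOML {α : Type*} [Lattice α] [BoundedOrder α] (compl : α → α) : Prop where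
  compl_compl : ∀ a, compl (compl a) = a
  compl_anti : ∀ a b : α, a ≤ b → compl b ≤ compl a
  sup_compl : ∀ a : α, a ⊔ compl a = ⊤
  inf_compl : ∀ a : α, a ⊓ compl a = ⊥
  orthomodular : ∀ a b : α, a ≤ b → b = a ⊔ (b ⊓ compl a)

/-- A state on the orthomodular lattice `(α, compl)`. -/
def IsState {α : Type*} [Lattice α] [BoundedOrder α] (compl : α → α) (m : α → ℝ) : Prop :=
  (∀ a : α, 0 ≤ m a ∧ m a ≤ 1) ∧ m ⊤ = 1 ∧
    ∀ a b : α, IsOrtho compl a b → m (a ⊔ b) = m a + m b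

/-- A strong set of states. -/
def IsStrongSet {α : Type*} [Lattice α] [BoundedOrder α] (compl : α → α)
    (S : Set (α → ℝ)) : Prop :=
  S.Nonempty ∧ (∀ m ∈ S, IsState compl m) ∧
    ∀ a b : α, (∀ m ∈ S, m a = 1 → m b = 1) ↔ a ≤ b

/-- If a singleton set of states on an OML is a strong set of states, then the
lattice is distributive. -/
theorem singleton_strong_implies_distributive
    {α : Type*} [Lattice α] [BoundedOrder α] (compl : α → α)
    (hOML : IsOML compl) (m : α → ℝ)
    (hS : IsStrongSet compl {m}) :
    ∀ a b c : α, a ⊓ (b ⊔ c) = (a ⊓ b) ⊔ (a ⊓ c) := by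
  obtain ⟨-, hstate, hiff⟩ := hS
  have htop : m ⊤ = 1 := (hstate m rfl).2.1
  have key : ∀ a : α, a = ⊥ ∨ a = ⊤ := by
    intro a
    by_cases h : m a = 1
    · right
      refine le_antisymm le_top ((hiff ⊤ a).mp ?_)
      rintro m' rfl _
      exact h
    · left
      refine le_antisymm ((hiff a ⊥).mp ?_) bot_le
      rintro m' rfl h1
      exact absurd h1 h
  intro a b c
  rcases key a with rfl | rfl <;> rcases key b with rfl | rfl <;>
    rcases key c with rfl | rfl <;> simp
end

section
/- If an orthomodular lattice L admits exactly one state (there is a unique function m : L → ℝ that is a state on L) and L is not distributive, then L admits no strong set of states; in particular the unique state on L does not belong to any strong set of states. -/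
/-- If an OML admits exactly one state and is not distributive, then it admits no
strong set of states; in particular, its unique state does not belong to any strong
set of states. -/
theorem unique_state_not_distributive_no_strong_set
    {α : Type*} [Lattice α] [BoundedOrder α] (compl : α → α)
    (hOML : IsOML compl) (m : α → ℝ)
    (hm : IsState compl m) (huniq : ∀ m' : α → ℝ, IsState compl m' → m' = m)
    (hnd : ¬ ∀ a b c : α, a ⊓ (b ⊔ c) = (a ⊓ b) ⊔ (a ⊓ c)) :
    (∀ S : Set (α → ℝ), ¬ IsStrongSet compl S) ∧
      (∀ S : Set (α → ℝ), IsStrongSet compl S → m ∉ S) := by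
  have main : ∀ S : Set (α → ℝ), ¬ IsStrongSet compl S := by
    intro S hS
    obtain ⟨⟨m₀, hm₀⟩, hstates, hstrong⟩ := hS
    -- every member of S equals m
    have hall : ∀ m' ∈ S, m' = m := fun m' h => huniq m' (hstates m' h)
    have key : ∀ a b : α, (m a = 1 → m b = 1) ↔ a ≤ b := by
      intro a b
      rw [← hstrong a b]
      constructor
      · intro h m' hm' ha
        rw [hall m' hm'] at ha ⊢; exact h ha
      · intro h ha
        have := h m₀ hm₀ (by rw [hall m₀ hm₀]; exact ha)
        rwa [hall m₀ hm₀] at this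
    have hbot : m ⊥ = 0 := by
      have := hm.2.2 ⊥ ⊥ (by simp [IsOrtho])
      simp at this
      linarith
    have hdichotomy : ∀ a : α, a = ⊥ ∨ a = ⊤ := by
      intro a
      by_cases ha : m a = 1
      · right
        have : (⊤ : α) ≤ a := (key ⊤ a).1 (fun _ => ha)
        exact le_antisymm le_top this
      · left
        have : a ≤ ⊥ := (key a ⊥).1 (fun h => absurd h ha)
        exact le_antisymm this bot_le
    apply hnd
    intro a b c
    rcases hdichotomy a with rfl | rfl <;> rcases hdichotomy b with rfl | rfl <;>
      rcases hdichotomy c with rfl | rfl <;> simp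
  exact ⟨main, fun S hS _ => main S hS⟩
end

section
/- The lattice of closed subspaces of a Hilbert space is orthomodular in the equivalence form: if K and L are closed subspaces of a Hilbert space H (over ℝ or ℂ) such that the topological closure of (K ⊓ L) + (K^⊥ ⊓ L^⊥) equals all of H, then K = L. -/
private theorem hilbert_orthomodular_aux {𝕜 : Type*} [RCLike 𝕜] {H : Type*}
    [NormedAddCommGroup H] [InnerProductSpace 𝕜 H] [CompleteSpace H]
    (K L : Submodule 𝕜 H)
    (hK : IsClosed (K : Set H)) (hL : IsClosed (L : Set H))
    (h : ((K ⊓ L) + (Kᗮ ⊓ Lᗮ)).topologicalClosure = ⊤) :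
    K ≤ L := by
  rw [Submodule.topologicalClosure_eq_top_iff] at h
  intro x hx
  have hKL : IsClosed ((K ⊓ L : Submodule 𝕜 H) : Set H) := by
    simpa [Submodule.coe_inf] using hK.inter hL
  haveI := hKL.completeSpace_coe
  haveI : Submodule.HasOrthogonalProjection (K ⊓ L) := Submodule.HasOrthogonalProjection.ofCompleteSpace _
  obtain ⟨a, ha, b, hb, hxab⟩ := (K ⊓ L).exists_add_mem_mem_orthogonal x
  have hbK : b ∈ (Kᗮ ⊓ Lᗮ)ᗮ := by
    have hxO : x ∈ (Kᗮ ⊓ Lᗮ)ᗮ := by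
      intro u hu
      have : u ∈ Kᗮ := hu.1
      exact (Submodule.mem_orthogonal _ _).mp
        ((Submodule.le_orthogonal_orthogonal K) hx) u this
    have haO : a ∈ (Kᗮ ⊓ Lᗮ)ᗮ := by
      intro u hu
      have : u ∈ Lᗮ := hu.2
      exact (Submodule.mem_orthogonal _ _).mp
        ((Submodule.le_orthogonal_orthogonal L) ha.2) u this
    have : b = x - a := by rw [hxab]; abel
    rw [this]
    exact Submodule.sub_mem _ hxO haO
  have hb0 : b = 0 := by
    have : b ∈ ((K ⊓ L) + (Kᗮ ⊓ Lᗮ))ᗮ := by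
      rw [Submodule.add_eq_sup, ← Submodule.inf_orthogonal]
      exact ⟨hb, hbK⟩
    rw [h] at this
    exact this
  have : x = a := by rw [hxab, hb0, add_zero]
  rw [this]
  exact ha.2

/-- The lattice of closed subspaces of a Hilbert space is orthomodular (equivalence
form): if the closure of `(K ⊓ L) + (Kᗮ ⊓ Lᗮ)` is all of `H`, then `K = L`. -/
theorem hilbert_orthomodular {𝕜 : Type*} [RCLike 𝕜] {H : Type*}
    [NormedAddCommGroup H] [InnerProductSpace 𝕜 H] [CompleteSpace H]
    (K L : Submodule 𝕜 H)
    (hK : IsClosed (K : Set H)) (hL : IsClosed (L : Set H))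
    (h : ((K ⊓ L) + (Kᗮ ⊓ Lᗮ)).topologicalClosure = ⊤) :
    K = L := by
  have h' : ((L ⊓ K) + (Lᗮ ⊓ Kᗮ)).topologicalClosure = ⊤ := by
    rwa [inf_comm (a := L), inf_comm (a := Lᗮ)]
  exact le_antisymm (hilbert_orthomodular_aux K L hK hL h)
    (hilbert_orthomodular_aux L K hL hK h')
end

section
/- The 3-uniform hypergraph 35-35a (35 vertices, 35 edges, listed in the context) admits exactly one state, namely the constant function assigning 1/3 to every vertex. -/
/-- A state on a 3-uniform hypergraph with vertex set `Fin n` and edge list `E`: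
a function `m` with `0 ≤ m v ≤ 1` for every vertex and whose values sum to `1`
over every edge. -/
def IsHypergraphState {n : ℕ} (E : List (Fin n × Fin n × Fin n)) (m : Fin n → ℝ) : Prop :=
  (∀ v, 0 ≤ m v ∧ m v ≤ 1) ∧ ∀ e ∈ E, m e.1 + m e.2.1 + m e.2.2 = 1

def edges3535a : List (Fin 35 × Fin 35 × Fin 35) :=
  [(32, 33, 34), (34, 4, 18), (18, 22, 19), (19, 14, 24), (24, 2, 7),
   (7, 20, 6), (6, 28, 8), (8, 15, 31), (31, 30, 29), (29, 13, 5),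
   (5, 21, 0), (0, 26, 1), (1, 11, 25), (25, 16, 17), (17, 27, 12),
   (12, 9, 32), (26, 27, 28), (23, 24, 25), (20, 21, 22), (15, 17, 21),
   (13, 19, 28), (10, 11, 20), (8, 9, 23), (4, 5, 23), (2, 3, 26),
   (3, 9, 22), (4, 10, 27), (10, 14, 31), (1, 18, 30), (3, 16, 29),
   (7, 12, 30), (6, 16, 34), (2, 15, 33), (0, 14, 32), (11, 13, 33)]

/-- The hypergraph 35-35a admits exactly one state, namely the constant
function assigning `1/3` to every vertex. -/
theorem edges3535a_unique_state :
    ∀ m : Fin 35 → ℝ, IsHypergraphState edges3535a m ↔ ∀ v, m v = 1/3 := by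
  intro m
  constructor
  · rintro ⟨_, he⟩
    simp only [edges3535a, List.mem_cons, List.not_mem_nil, or_false, forall_eq_or_imp, forall_eq] at he
    obtain ⟨h1,h2,h3,h4,h5,h6,h7,h8,h9,h10,h11,h12,h13,h14,h15,h16,h17,h18,h19,h20,h21,h22,h23,h24,h25,h26,h27,h28,h29,h30,h31,h32,h33,h34,h35⟩ := he
    have e0 : m 0 = 1/3 := by linear_combination (-1/6 : ℝ) * h1 + (1/6 : ℝ) * h2 + (-1/6 : ℝ) * h4 + (1/6 : ℝ) * h9 + (-1/6 : ℝ) * h10 + (1/3 : ℝ) * h11 + (1/3 : ℝ) * h12 + (-1/6 : ℝ) * h13 + (1/6 : ℝ) * h15 + (-1/6 : ℝ) * h16 + (-1/6 : ℝ) * h17 + (1/6 : ℝ) * h18 + (-1/6 : ℝ) * h19 + (-1/6 : ℝ) * h20 + (1/6 : ℝ) * h21 + (1/6 : ℝ) * h22 + (-1/6 : ℝ) * h24 + (-1/6 : ℝ) * h25 + (1/6 : ℝ) * h26 + (-1/6 : ℝ) * h28 + (-1/6 : ℝ) * h29 + (1/6 : ℝ) * h33 + (1/3 : ℝ) * h3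4
    have e1 : m 1 = 1/3 := by linear_combination (1/6 : ℝ) * h1 + (-1/6 : ℝ) * h2 + (-1/6 : ℝ) * h3 + (1/6 : ℝ) * h5 + (-1/6 : ℝ) * h9 + (-1/6 : ℝ) * h11 + (1/3 : ℝ) * h12 + (1/3 : ℝ) * h13 + (-1/6 : ℝ) * h14 + (1/6 : ℝ) * h15 + (-1/6 : ℝ) * h17 + (-1/6 : ℝ) * h18 + (1/6 : ℝ) * h19 + (1/6 : ℝ) * h21 + (-1/6 : ℝ) * h22 + (1/6 : ℝ) * h24 + (-1/6 : ℝ) * h25 + (1/6 : ℝ) * h28 + (1/3 : ℝ) * h29 + (1/6 : ℝ) * h30 + (-1/6 : ℝ) * h31 + (-1/6 : ℝ) * h34 + (-1/6 : ℝ) * h35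
    have e2 : m 2 = 1/3 := by linear_combination (-1/6 : ℝ) * h1 + (-1/6 : ℝ) * h4 + (1/3 : ℝ) * h5 + (-1/6 : ℝ) * h6 + (-1/6 : ℝ) * h8 + (1/6 : ℝ) * h9 + (-1/6 : ℝ) * h12 + (1/6 : ℝ) * h13 + (1/6 : ℝ) * h15 + (-1/6 : ℝ) * h17 + (-1/6 : ℝ) * h18 + (1/6 : ℝ) * h19 + (-1/6 : ℝ) * h20 + (1/6 : ℝ) * h21 + (1/6 : ℝ) * h23 + (1/3 : ℝ) * h25 + (-1/6 : ℝ) * h26 + (-1/6 : ℝ) * h30 + (-1/6 : ℝ) * h31 + (1/6 : ℝ) * h32 + (1/3 : ℝ) * h33 + (1/6 : ℝ) * h34 + (-1/6 : ℝ) * h35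
    have e3 : m 3 = 1/3 := by linear_combination (1/6 : ℝ) * h1 + (-1/6 : ℝ) * h3 + (-1/6 : ℝ) * h5 + (1/6 : ℝ) * h6 + (1/6 : ℝ) * h8 + (-1/6 : ℝ) * h9 + (-1/6 : ℝ) * h10 + (1/6 : ℝ) * h11 + (-1/6 : ℝ) * h12 + (-1/6 : ℝ) * h14 + (1/6 : ℝ) * h15 + (-1/6 : ℝ) * h16 + (-1/6 : ℝ) * h17 + (1/6 : ℝ) * h18 + (-1/6 : ℝ) * h19 + (1/6 : ℝ) * h21 + (-1/6 : ℝ) * h23 + (1/3 : ℝ) * h25 + (1/3 : ℝ) * h26 + (1/6 : ℝ) * h29 + (1/3 : ℝ) * h30 + (-1/6 : ℝ) * h32 + (-1/6 : ℝ) * h33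
    have e4 : m 4 = 1/3 := by linear_combination (-1/6 : ℝ) * h1 + (1/3 : ℝ) * h2 + (-1/6 : ℝ) * h3 + (1/6 : ℝ) * h4 + (1/6 : ℝ) * h7 + (1/6 : ℝ) * h9 + (-1/6 : ℝ) * h10 + (-1/6 : ℝ) * h11 + (1/6 : ℝ) * h12 + (1/6 : ℝ) * h14 + (-1/6 : ℝ) * h15 + (1/6 : ℝ) * h16 + (-1/6 : ℝ) * h17 + (-1/6 : ℝ) * h18 + (1/6 : ℝ) * h19 + (-1/6 : ℝ) * h22 + (-1/6 : ℝ) * h23 + (1/3 : ℝ) * h24 + (1/3 : ℝ) * h27 + (-1/6 : ℝ) * h28 + (-1/6 : ℝ) * h29 + (-1/6 : ℝ) * h32 + (1/6 : ℝ) * h35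
    have e5 : m 5 = 1/3 := by linear_combination (1/6 : ℝ) * h1 + (-1/6 : ℝ) * h2 + (1/6 : ℝ) * h4 + (1/6 : ℝ) * h8 + (-1/6 : ℝ) * h9 + (1/3 : ℝ) * h10 + (1/3 : ℝ) * h11 + (-1/6 : ℝ) * h12 + (1/6 : ℝ) * h14 + (1/6 : ℝ) * h17 + (-1/6 : ℝ) * h18 + (-1/6 : ℝ) * h19 + (-1/6 : ℝ) * h20 + (-1/6 : ℝ) * h21 + (1/6 : ℝ) * h22 + (-1/6 : ℝ) * h23 + (1/3 : ℝ) * h24 + (1/6 : ℝ) * h26 + (-1/6 : ℝ) * h27 + (1/6 : ℝ) * h29 + (-1/6 : ℝ) * h30 + (-1/6 : ℝ) * h34 + (-1/6 : ℝ) * h35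
    have e6 : m 6 = 1/3 := by linear_combination (-1/6 : ℝ) * h1 + (-1/6 : ℝ) * h2 + (1/6 : ℝ) * h3 + (-1/6 : ℝ) * h5 + (1/3 : ℝ) * h6 + (1/3 : ℝ) * h7 + (-1/6 : ℝ) * h8 + (1/6 : ℝ) * h9 + (-1/6 : ℝ) * h14 + (1/6 : ℝ) * h16 + (-1/6 : ℝ) * h17 + (1/6 : ℝ) * h18 + (-1/6 : ℝ) * h19 + (1/6 : ℝ) * h20 + (-1/6 : ℝ) * h21 + (-1/6 : ℝ) * h22 + (-1/6 : ℝ) * h23 + (1/6 : ℝ) * h25 + (1/6 : ℝ) * h27 + (-1/6 : ℝ) * h30 + (-1/6 : ℝ) * h31 + (1/3 : ℝ) * h32 + (1/6 : ℝ) * h35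
    have e7 : m 7 = 1/3 := by linear_combination (1/6 : ℝ) * h1 + (1/6 : ℝ) * h3 + (-1/6 : ℝ) * h4 + (1/3 : ℝ) * h5 + (1/3 : ℝ) * h6 + (-1/6 : ℝ) * h7 + (-1/6 : ℝ) * h9 + (1/6 : ℝ) * h13 + (-1/6 : ℝ) * h15 + (-1/6 : ℝ) * h16 + (1/6 : ℝ) * h17 + (-1/6 : ℝ) * h18 + (-1/6 : ℝ) * h19 + (1/6 : ℝ) * h20 + (-1/6 : ℝ) * h22 + (1/6 : ℝ) * h23 + (-1/6 : ℝ) * h25 + (1/6 : ℝ) * h28 + (-1/6 : ℝ) * h29 + (1/6 : ℝ) * h30 + (1/3 : ℝ) * h31 + (-1/6 : ℝ) * h32 + (-1/6 : ℝ) * h33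
    have e8 : m 8 = 1/3 := by linear_combination (1/6 : ℝ) * h1 + (1/6 : ℝ) * h4 + (-1/6 : ℝ) * h6 + (1/3 : ℝ) * h7 + (1/3 : ℝ) * h8 + (-1/6 : ℝ) * h9 + (1/6 : ℝ) * h10 + (1/6 : ℝ) * h14 + (-1/6 : ℝ) * h16 + (-1/6 : ℝ) * h17 + (-1/6 : ℝ) * h18 + (1/6 : ℝ) * h19 + (-1/6 : ℝ) * h20 + (-1/6 : ℝ) * h21 + (1/3 : ℝ) * h23 + (-1/6 : ℝ) * h24 + (1/6 : ℝ) * h25 + (-1/6 : ℝ) * h26 + (1/6 : ℝ) * h27 + (-1/6 : ℝ) * h28 + (1/6 : ℝ) * h31 + (-1/6 : ℝ) * h32 + (-1/6 : ℝ) * h33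
    have e9 : m 9 = 1/3 := by linear_combination (-1/6 : ℝ) * h1 + (1/6 : ℝ) * h2 + (-1/6 : ℝ) * h3 + (1/6 : ℝ) * h4 + (1/6 : ℝ) * h6 + (-1/6 : ℝ) * h7 + (-1/6 : ℝ) * h8 + (1/6 : ℝ) * h9 + (1/6 : ℝ) * h11 + (1/6 : ℝ) * h14 + (-1/6 : ℝ) * h15 + (1/3 : ℝ) * h16 + (1/6 : ℝ) * h17 + (-1/6 : ℝ) * h18 + (-1/6 : ℝ) * h19 + (1/3 : ℝ) * h23 + (-1/6 : ℝ) * h24 + (-1/6 : ℝ) * h25 + (1/3 : ℝ) * h26 + (-1/6 : ℝ) * h30 + (-1/6 : ℝ) * h31 + (1/6 : ℝ) * h33 + (-1/6 : ℝ) * h34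
    have e10 : m 10 = 1/3 := by linear_combination (1/6 : ℝ) * h1 + (-1/6 : ℝ) * h2 + (1/6 : ℝ) * h3 + (-1/6 : ℝ) * h4 + (-1/6 : ℝ) * h6 + (1/6 : ℝ) * h7 + (-1/6 : ℝ) * h8 + (-1/6 : ℝ) * h9 + (1/6 : ℝ) * h10 + (1/6 : ℝ) * h12 + (-1/6 : ℝ) * h13 + (-1/6 : ℝ) * h15 + (-1/6 : ℝ) * h17 + (1/6 : ℝ) * h18 + (-1/6 : ℝ) * h19 + (1/6 : ℝ) * h20 + (1/3 : ℝ) * h22 + (-1/6 : ℝ) * h24 + (1/3 : ℝ) * h27 + (1/3 : ℝ) * h28 + (1/6 : ℝ) * h31 + (-1/6 : ℝ) * h34 + (-1/6 : ℝ) * h35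
    have e11 : m 11 = 1/3 := by linear_combination (-1/6 : ℝ) * h1 + (1/6 : ℝ) * h3 + (1/6 : ℝ) * h5 + (-1/6 : ℝ) * h6 + (1/6 : ℝ) * h9 + (-1/6 : ℝ) * h10 + (-1/6 : ℝ) * h12 + (1/3 : ℝ) * h13 + (-1/6 : ℝ) * h14 + (1/6 : ℝ) * h17 + (-1/6 : ℝ) * h18 + (-1/6 : ℝ) * h19 + (1/6 : ℝ) * h20 + (-1/6 : ℝ) * h21 + (1/3 : ℝ) * h22 + (1/6 : ℝ) * h24 + (-1/6 : ℝ) * h27 + (-1/6 : ℝ) * h28 + (-1/6 : ℝ) * h29 + (1/6 : ℝ) * h32 + (-1/6 : ℝ) * h33 + (1/6 : ℝ) * h34 + (1/3 : ℝ) * h35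
    have e12 : m 12 = 1/3 := by linear_combination (-1/6 : ℝ) * h1 + (1/6 : ℝ) * h2 + (-1/6 : ℝ) * h5 + (-1/6 : ℝ) * h6 + (1/6 : ℝ) * h7 + (-1/6 : ℝ) * h9 + (1/6 : ℝ) * h12 + (-1/6 : ℝ) * h14 + (1/3 : ℝ) * h15 + (1/3 : ℝ) * h16 + (-1/6 : ℝ) * h17 + (1/6 : ℝ) * h18 + (1/6 : ℝ) * h19 + (-1/6 : ℝ) * h20 + (-1/6 : ℝ) * h23 + (-1/6 : ℝ) * h26 + (-1/6 : ℝ) * h27 + (1/6 : ℝ) * h28 + (-1/6 : ℝ) * h29 + (1/6 : ℝ) * h30 + (1/3 : ℝ) * h31 + (1/6 : ℝ) * h33 + (-1/6 : ℝ) * h34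
    have e13 : m 13 = 1/3 := by linear_combination (-1/6 : ℝ) * h1 + (-1/6 : ℝ) * h3 + (-1/6 : ℝ) * h4 + (-1/6 : ℝ) * h7 + (1/6 : ℝ) * h8 + (-1/6 : ℝ) * h9 + (1/3 : ℝ) * h10 + (-1/6 : ℝ) * h11 + (-1/6 : ℝ) * h13 + (-1/6 : ℝ) * h17 + (1/6 : ℝ) * h18 + (1/6 : ℝ) * h19 + (1/3 : ℝ) * h21 + (-1/6 : ℝ) * h22 + (-1/6 : ℝ) * h24 + (1/6 : ℝ) * h25 + (1/6 : ℝ) * h27 + (1/6 : ℝ) * h29 + (-1/6 : ℝ) * h30 + (1/6 : ℝ) * h32 + (-1/6 : ℝ) * h33 + (1/6 : ℝ) * h34 + (1/3 : ℝ) * h35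
    have e14 : m 14 = 1/3 := by linear_combination (-1/6 : ℝ) * h1 + (1/6 : ℝ) * h2 + (-1/6 : ℝ) * h3 + (1/3 : ℝ) * h4 + (-1/6 : ℝ) * h5 + (-1/6 : ℝ) * h8 + (-1/6 : ℝ) * h9 + (1/6 : ℝ) * h10 + (-1/6 : ℝ) * h11 + (-1/6 : ℝ) * h12 + (1/6 : ℝ) * h13 + (-1/6 : ℝ) * h16 + (1/6 : ℝ) * h17 + (-1/6 : ℝ) * h18 + (1/6 : ℝ) * h19 + (-1/6 : ℝ) * h21 + (-1/6 : ℝ) * h22 + (1/6 : ℝ) * h23 + (-1/6 : ℝ) * h27 + (1/3 : ℝ) * h28 + (1/6 : ℝ) * h31 + (1/6 : ℝ) * h33 + (1/3 : ℝ) * h34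
    have e15 : m 15 = 1/3 := by linear_combination (-1/6 : ℝ) * h1 + (-1/6 : ℝ) * h5 + (-1/6 : ℝ) * h7 + (1/3 : ℝ) * h8 + (-1/6 : ℝ) * h9 + (1/6 : ℝ) * h10 + (-1/6 : ℝ) * h11 + (-1/6 : ℝ) * h14 + (-1/6 : ℝ) * h15 + (1/6 : ℝ) * h17 + (1/6 : ℝ) * h18 + (-1/6 : ℝ) * h19 + (1/3 : ℝ) * h20 + (1/6 : ℝ) * h22 + (-1/6 : ℝ) * h23 + (-1/6 : ℝ) * h25 + (1/6 : ℝ) * h26 + (-1/6 : ℝ) * h28 + (1/6 : ℝ) * h31 + (1/6 : ℝ) * h32 + (1/3 : ℝ) * h33 + (1/6 : ℝ) * h34 + (-1/6 : ℝ) * h35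
    have e16 : m 16 = 1/3 := by linear_combination (-1/6 : ℝ) * h1 + (-1/6 : ℝ) * h2 + (1/6 : ℝ) * h5 + (-1/6 : ℝ) * h6 + (-1/6 : ℝ) * h7 + (1/6 : ℝ) * h8 + (-1/6 : ℝ) * h9 + (-1/6 : ℝ) * h10 + (-1/6 : ℝ) * h13 + (1/3 : ℝ) * h14 + (-1/6 : ℝ) * h15 + (1/6 : ℝ) * h16 + (1/6 : ℝ) * h17 + (-1/6 : ℝ) * h18 + (1/6 : ℝ) * h19 + (-1/6 : ℝ) * h20 + (1/6 : ℝ) * h24 + (-1/6 : ℝ) * h25 + (-1/6 : ℝ) * h26 + (1/6 : ℝ) * h29 + (1/3 : ℝ) * h30 + (1/3 : ℝ) * h32 + (1/6 : ℝ) * h35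
    have e17 : m 17 = 1/3 := by linear_combination (1/6 : ℝ) * h1 + (1/6 : ℝ) * h5 + (1/6 : ℝ) * h7 + (-1/6 : ℝ) * h8 + (1/6 : ℝ) * h9 + (-1/6 : ℝ) * h11 + (1/6 : ℝ) * h12 + (-1/6 : ℝ) * h13 + (1/3 : ℝ) * h14 + (1/3 : ℝ) * h15 + (-1/6 : ℝ) * h16 + (-1/6 : ℝ) * h17 + (-1/6 : ℝ) * h18 + (-1/6 : ℝ) * h19 + (1/3 : ℝ) * h20 + (1/6 : ℝ) * h22 + (1/6 : ℝ) * h24 + (1/6 : ℝ) * h26 + (-1/6 : ℝ) * h27 + (-1/6 : ℝ) * h30 + (-1/6 : ℝ) * h31 + (-1/6 : ℝ) * h32 + (-1/6 : ℝ) * h33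
    have e18 : m 18 = 1/3 := by linear_combination (-1/6 : ℝ) * h1 + (1/3 : ℝ) * h2 + (1/3 : ℝ) * h3 + (-1/6 : ℝ) * h4 + (1/6 : ℝ) * h6 + (-1/6 : ℝ) * h9 + (1/6 : ℝ) * h11 + (-1/6 : ℝ) * h12 + (-1/6 : ℝ) * h13 + (1/6 : ℝ) * h16 + (1/6 : ℝ) * h17 + (1/6 : ℝ) * h18 + (-1/6 : ℝ) * h19 + (-1/6 : ℝ) * h21 + (-1/6 : ℝ) * h24 + (-1/6 : ℝ) * h26 + (-1/6 : ℝ) * h27 + (1/6 : ℝ) * h28 + (1/3 : ℝ) * h29 + (1/6 : ℝ) * h30 + (-1/6 : ℝ) * h31 + (-1/6 : ℝ) * h32 + (1/6 : ℝ) * h35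
    have e19 : m 19 = 1/3 := by linear_combination (1/6 : ℝ) * h1 + (-1/6 : ℝ) * h2 + (1/3 : ℝ) * h3 + (1/3 : ℝ) * h4 + (-1/6 : ℝ) * h5 + (1/6 : ℝ) * h6 + (-1/6 : ℝ) * h7 + (1/6 : ℝ) * h9 + (-1/6 : ℝ) * h10 + (1/6 : ℝ) * h11 + (1/6 : ℝ) * h13 + (-1/6 : ℝ) * h17 + (-1/6 : ℝ) * h18 + (-1/6 : ℝ) * h19 + (1/3 : ℝ) * h21 + (1/6 : ℝ) * h23 + (1/6 : ℝ) * h25 + (-1/6 : ℝ) * h26 + (1/6 : ℝ) * h27 + (-1/6 : ℝ) * h28 + (-1/6 : ℝ) * h29 + (-1/6 : ℝ) * h34 + (-1/6 : ℝ) * h35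
    have e20 : m 20 = 1/3 := by linear_combination (1/6 : ℝ) * h2 + (-1/3 : ℝ) * h3 + (1/6 : ℝ) * h4 + (-1/6 : ℝ) * h5 + (1/3 : ℝ) * h6 + (-1/6 : ℝ) * h7 + (1/6 : ℝ) * h8 + (-1/6 : ℝ) * h13 + (1/6 : ℝ) * h14 + (1/6 : ℝ) * h15 + (1/3 : ℝ) * h19 + (-1/3 : ℝ) * h20 + (1/6 : ℝ) * h21 + (1/3 : ℝ) * h22 + (-1/6 : ℝ) * h27 + (-1/6 : ℝ) * h28 + (1/6 : ℝ) * h29 + (-1/6 : ℝ) * h31 + (-1/6 : ℝ) * h32 + (1/6 : ℝ) * h33 + (-1/6 : ℝ) * h35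
    have e21 : m 21 = 1/3 := by linear_combination (-1/6 : ℝ) * h8 + (-1/6 : ℝ) * h10 + (1/3 : ℝ) * h11 + (-1/6 : ℝ) * h12 + (1/6 : ℝ) * h13 + (-1/6 : ℝ) * h14 + (-1/6 : ℝ) * h15 + (1/6 : ℝ) * h16 + (1/3 : ℝ) * h19 + (1/3 : ℝ) * h20 + (-1/3 : ℝ) * h22 + (1/6 : ℝ) * h23 + (-1/6 : ℝ) * h24 + (1/6 : ℝ) * h25 + (-1/3 : ℝ) * h26 + (1/6 : ℝ) * h27 + (1/6 : ℝ) * h28 + (1/6 : ℝ) * h30 + (-1/6 : ℝ) * h33 + (-1/6 : ℝ) * h34 + (1/6 : ℝ) * h35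
    have e22 : m 22 = 1/3 := by linear_combination (-1/6 : ℝ) * h2 + (1/3 : ℝ) * h3 + (-1/6 : ℝ) * h4 + (1/6 : ℝ) * h5 + (-1/3 : ℝ) * h6 + (1/6 : ℝ) * h7 + (1/6 : ℝ) * h10 + (-1/3 : ℝ) * h11 + (1/6 : ℝ) * h12 + (-1/6 : ℝ) * h16 + (1/3 : ℝ) * h19 + (-1/6 : ℝ) * h21 + (-1/6 : ℝ) * h23 + (1/6 : ℝ) * h24 + (-1/6 : ℝ) * h25 + (1/3 : ℝ) * h26 + (-1/6 : ℝ) * h29 + (-1/6 : ℝ) * h30 + (1/6 : ℝ) * h31 + (1/6 : ℝ) * h32 + (1/6 : ℝ) * h34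
    have e23 : m 23 = 1/3 := by linear_combination (-1/6 : ℝ) * h2 + (1/6 : ℝ) * h3 + (-1/3 : ℝ) * h4 + (-1/6 : ℝ) * h7 + (-1/6 : ℝ) * h8 + (-1/6 : ℝ) * h10 + (-1/6 : ℝ) * h11 + (-1/3 : ℝ) * h14 + (1/6 : ℝ) * h15 + (-1/6 : ℝ) * h16 + (1/3 : ℝ) * h18 + (1/6 : ℝ) * h20 + (1/6 : ℝ) * h21 + (1/3 : ℝ) * h23 + (1/3 : ℝ) * h24 + (-1/6 : ℝ) * h26 + (-1/6 : ℝ) * h27 + (1/6 : ℝ) * h28 + (1/6 : ℝ) * h30 + (1/6 : ℝ) * h32 + (1/6 : ℝ) * h34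
    have e24 : m 24 = 1/3 := by linear_combination (-1/6 : ℝ) * h3 + (1/3 : ℝ) * h4 + (1/3 : ℝ) * h5 + (-1/6 : ℝ) * h6 + (1/6 : ℝ) * h7 + (1/6 : ℝ) * h8 + (1/6 : ℝ) * h12 + (-1/3 : ℝ) * h13 + (1/6 : ℝ) * h16 + (1/3 : ℝ) * h18 + (-1/6 : ℝ) * h21 + (1/6 : ℝ) * h22 + (-1/3 : ℝ) * h23 + (-1/6 : ℝ) * h25 + (1/6 : ℝ) * h26 + (-1/6 : ℝ) * h28 + (1/6 : ℝ) * h29 + (-1/6 : ℝ) * h31 + (-1/6 : ℝ) * h33 + (-1/6 : ℝ) * h34 + (1/6 : ℝ) * h35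
    have e25 : m 25 = 1/3 := by linear_combination (1/6 : ℝ) * h2 + (-1/3 : ℝ) * h5 + (1/6 : ℝ) * h6 + (1/6 : ℝ) * h10 + (1/6 : ℝ) * h11 + (-1/6 : ℝ) * h12 + (1/3 : ℝ) * h13 + (1/3 : ℝ) * h14 + (-1/6 : ℝ) * h15 + (1/3 : ℝ) * h18 + (-1/6 : ℝ) * h20 + (-1/6 : ℝ) * h22 + (-1/3 : ℝ) * h24 + (1/6 : ℝ) * h25 + (1/6 : ℝ) * h27 + (-1/6 : ℝ) * h29 + (-1/6 : ℝ) * h30 + (1/6 : ℝ) * h31 + (-1/6 : ℝ) * h32 + (1/6 : ℝ) * h33 + (-1/6 : ℝ) * h35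
    have e26 : m 26 = 1/3 := by linear_combination (1/6 : ℝ) * h3 + (1/6 : ℝ) * h4 + (-1/6 : ℝ) * h5 + (1/6 : ℝ) * h10 + (-1/6 : ℝ) * h11 + (1/3 : ℝ) * h12 + (-1/6 : ℝ) * h13 + (1/6 : ℝ) * h14 + (-1/3 : ℝ) * h15 + (1/6 : ℝ) * h16 + (1/3 : ℝ) * h17 + (1/6 : ℝ) * h20 + (-1/3 : ℝ) * h21 + (1/3 : ℝ) * h25 + (-1/6 : ℝ) * h26 + (-1/6 : ℝ) * h29 + (-1/6 : ℝ) * h30 + (1/6 : ℝ) * h31 + (-1/6 : ℝ) * h33 + (-1/6 : ℝ) * h34 + (1/6 : ℝ) * h35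
    have e27 : m 27 = 1/3 := by linear_combination (-1/6 : ℝ) * h2 + (1/6 : ℝ) * h6 + (-1/3 : ℝ) * h7 + (1/6 : ℝ) * h8 + (1/6 : ℝ) * h11 + (-1/3 : ℝ) * h12 + (1/6 : ℝ) * h13 + (-1/6 : ℝ) * h14 + (1/3 : ℝ) * h15 + (-1/6 : ℝ) * h16 + (1/3 : ℝ) * h17 + (-1/6 : ℝ) * h20 + (-1/6 : ℝ) * h22 + (1/6 : ℝ) * h23 + (-1/6 : ℝ) * h24 + (1/3 : ℝ) * h27 + (-1/6 : ℝ) * h28 + (1/6 : ℝ) * h29 + (-1/6 : ℝ) * h31 + (1/6 : ℝ) * h32 + (1/6 : ℝ) * h34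
    have e28 : m 28 = 1/3 := by linear_combination (1/6 : ℝ) * h2 + (-1/6 : ℝ) * h3 + (-1/6 : ℝ) * h4 + (1/6 : ℝ) * h5 + (-1/6 : ℝ) * h6 + (1/3 : ℝ) * h7 + (-1/6 : ℝ) * h8 + (-1/6 : ℝ) * h10 + (1/3 : ℝ) * h17 + (1/3 : ℝ) * h21 + (1/6 : ℝ) * h22 + (-1/6 : ℝ) * h23 + (1/6 : ℝ) * h24 + (-1/3 : ℝ) * h25 + (1/6 : ℝ) * h26 + (-1/3 : ℝ) * h27 + (1/6 : ℝ) * h28 + (1/6 : ℝ) * h30 + (-1/6 : ℝ) * h32 + (1/6 : ℝ) * h33 + (-1/6 : ℝ) * h35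
    have e29 : m 29 = 1/3 := by linear_combination (1/6 : ℝ) * h2 + (1/6 : ℝ) * h3 + (1/6 : ℝ) * h7 + (-1/3 : ℝ) * h8 + (1/3 : ℝ) * h9 + (1/3 : ℝ) * h10 + (-1/6 : ℝ) * h11 + (1/6 : ℝ) * h12 + (1/6 : ℝ) * h13 + (-1/6 : ℝ) * h14 + (1/6 : ℝ) * h20 + (-1/6 : ℝ) * h21 + (1/6 : ℝ) * h23 + (-1/6 : ℝ) * h24 + (-1/6 : ℝ) * h25 + (-1/6 : ℝ) * h26 + (-1/3 : ℝ) * h29 + (1/3 : ℝ) * h30 + (-1/6 : ℝ) * h32 + (1/6 : ℝ) * h33 + (-1/6 : ℝ) * h35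
    have e30 : m 30 = 1/3 := by linear_combination (-1/6 : ℝ) * h2 + (-1/6 : ℝ) * h3 + (1/6 : ℝ) * h4 + (-1/6 : ℝ) * h5 + (-1/6 : ℝ) * h6 + (1/3 : ℝ) * h9 + (-1/6 : ℝ) * h12 + (-1/6 : ℝ) * h13 + (1/6 : ℝ) * h14 + (-1/6 : ℝ) * h15 + (-1/6 : ℝ) * h16 + (1/6 : ℝ) * h22 + (1/6 : ℝ) * h25 + (1/6 : ℝ) * h26 + (1/6 : ℝ) * h27 + (-1/3 : ℝ) * h28 + (1/3 : ℝ) * h29 + (-1/3 : ℝ) * h30 + (1/3 : ℝ) * h31 + (1/6 : ℝ) * h32 + (1/6 : ℝ) * h34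
    have e31 : m 31 = 1/3 := by linear_combination (-1/6 : ℝ) * h4 + (1/6 : ℝ) * h5 + (1/6 : ℝ) * h6 + (-1/6 : ℝ) * h7 + (1/3 : ℝ) * h8 + (1/3 : ℝ) * h9 + (-1/3 : ℝ) * h10 + (1/6 : ℝ) * h11 + (1/6 : ℝ) * h15 + (1/6 : ℝ) * h16 + (-1/6 : ℝ) * h20 + (1/6 : ℝ) * h21 + (-1/6 : ℝ) * h22 + (-1/6 : ℝ) * h23 + (1/6 : ℝ) * h24 + (-1/6 : ℝ) * h27 + (1/3 : ℝ) * h28 + (-1/3 : ℝ) * h31 + (-1/6 : ℝ) * h33 + (-1/6 : ℝ) * h34 + (1/6 : ℝ) * h35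
    have e32 : m 32 = 1/3 := by linear_combination (1/3 : ℝ) * h1 + (-1/3 : ℝ) * h2 + (1/6 : ℝ) * h3 + (-1/6 : ℝ) * h4 + (1/6 : ℝ) * h5 + (1/6 : ℝ) * h8 + (-1/6 : ℝ) * h11 + (-1/6 : ℝ) * h12 + (-1/6 : ℝ) * h15 + (1/3 : ℝ) * h16 + (1/6 : ℝ) * h20 + (-1/6 : ℝ) * h23 + (1/6 : ℝ) * h24 + (1/6 : ℝ) * h25 + (-1/6 : ℝ) * h26 + (1/6 : ℝ) * h27 + (-1/6 : ℝ) * h28 + (1/6 : ℝ) * h29 + (-1/6 : ℝ) * h31 + (-1/3 : ℝ) * h33 + (1/3 : ℝ) * h34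
    have e33 : m 33 = 1/3 := by linear_combination (1/3 : ℝ) * h1 + (1/6 : ℝ) * h4 + (-1/6 : ℝ) * h5 + (1/6 : ℝ) * h6 + (1/6 : ℝ) * h7 + (-1/6 : ℝ) * h8 + (-1/6 : ℝ) * h10 + (1/6 : ℝ) * h11 + (1/6 : ℝ) * h12 + (-1/6 : ℝ) * h13 + (1/6 : ℝ) * h14 + (-1/6 : ℝ) * h20 + (-1/6 : ℝ) * h21 + (-1/6 : ℝ) * h22 + (-1/6 : ℝ) * h25 + (1/6 : ℝ) * h28 + (1/6 : ℝ) * h30 + (-1/3 : ℝ) * h32 + (1/3 : ℝ) * h33 + (-1/3 : ℝ) * h34 + (1/3 : ℝ) * h35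
    have e34 : m 34 = 1/3 := by linear_combination (1/3 : ℝ) * h1 + (1/3 : ℝ) * h2 + (-1/6 : ℝ) * h3 + (-1/6 : ℝ) * h6 + (-1/6 : ℝ) * h7 + (1/6 : ℝ) * h10 + (1/6 : ℝ) * h13 + (-1/6 : ℝ) * h14 + (1/6 : ℝ) * h15 + (-1/3 : ℝ) * h16 + (1/6 : ℝ) * h21 + (1/6 : ℝ) * h22 + (1/6 : ℝ) * h23 + (-1/6 : ℝ) * h24 + (1/6 : ℝ) * h26 + (-1/6 : ℝ) * h27 + (-1/6 : ℝ) * h29 + (-1/6 : ℝ) * h30 + (1/6 : ℝ) * h31 + (1/3 : ℝ) * h32 + (-1/3 : ℝ) * h35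
    intro v
    fin_cases v <;> assumption
  · intro h
    constructor
    · intro v; rw [h v]; norm_num
    · intro e _; rw [h e.1, h e.2.1, h e.2.2]; norm_num
end
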